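/- arXiv:2007.03217 — 2 statements merged into one kernel-verified Lean document; each statement's English description precedes it below -/
import Mathlib

section
/- Let G ≅ G₁ × ℤ_n where G₁ is a finite non-cyclic abelian group with no cyclic Sylow subgroup and gcd(|G₁|, n) = 1. Then the proper enhanced power graph G_e^{**}(G) (the graph obtained by deleting all dominating vertices from the enhanced power graph) is disconnected if and only if G₁ is a p-group. -/
/-!
A non-identity element `a` of `G₁` is never dominating: if `r` divides its order, the Sylow
`r`-subgroup is abelian and not cyclic, so it has two distinct subgroups of order `r`, and they
cannot both share a cyclic subgroup with `a`, whose cyclic overgroups all contain the same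
subgroup of order `r`. Since `|G₁|` and `n` are coprime, the `ℤ_n` coordinate never affects
adjacency, so the vertices left are the pairs `(a, x)` with `a ≠ 1`. If `G₁` is a `p`-group, the
subgroup of order `p` inside `⟨a⟩` is constant along edges, and two distinct such subgroups give
two components. If two primes `p ≠ q` divide `|G₁|`, elements of coprime orders are adjacent,
so every vertex reaches a fixed element of order `p` through an element of prime order in `⟨a⟩`,
possibly via an element of order `q`.
-/

/-- The enhanced power graph of a group `G`: vertices are elements of `G`,
with distinct `u`, `v` adjacent iff both are powers of a common element. -/
def enhancedPowerGraph (G : Type*) [Group G] : SimpleGraph G where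
  Adj u v := u ≠ v ∧ ∃ w : G, u ∈ Subgroup.zpowers w ∧ v ∈ Subgroup.zpowers w
  symm := by
    constructor
    rintro u v ⟨h, w, hu, hv⟩
    exact ⟨h.symm, w, hv, hu⟩
  loopless := by
    constructor
    rintro u ⟨h, -⟩
    exact h rfl

/-- A dominating vertex: adjacent to every other vertex. -/
def IsDominating {V : Type*} (Γ : SimpleGraph V) (v : V) : Prop :=
  ∀ u, u ≠ v → Γ.Adj v u

/-- The vertex connectivity: the least size of a set of vertices whose removal
leaves a graph that is not connected. -/
noncomputable def vertexConnectivity {V : Type*} (Γ : SimpleGraph V) : ℕ :=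
  sInf {n | ∃ s : Set V, s.ncard = n ∧ ¬ (Γ.induce sᶜ).Connected}

open Subgroup

theorem zpowers_eq_zpowers_pow_of_mem {G : Type*} [Group G] [Finite G] {w x : G}
    (hx : x ∈ zpowers w) : zpowers x = zpowers (w ^ (orderOf w / orderOf x)) := by
  have hdvd : orderOf x ∣ orderOf w := orderOf_dvd_of_mem_zpowers hx
  obtain ⟨i, rfl⟩ : ∃ i : ℕ, w ^ i = x := (mem_powers_iff_mem_zpowers.mpr hx)
  have hi : orderOf w / orderOf (w ^ i) ∣ i := by
    have : orderOf w ∣ orderOf (w ^ i) * i := by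
      rw [orderOf_dvd_iff_pow_eq_one, mul_comm, pow_mul, pow_orderOf_eq_one]
    exact (Nat.div_dvd_iff_dvd_mul hdvd (orderOf_pos _)).mpr this
  refine (Subgroup.eq_of_le_of_card_ge (zpowers_le.mpr ?_) ?_)
  · exact ⟨((i / (orderOf w / orderOf (w ^ i)) : ℕ) : ℤ), by
      simp only [zpow_natCast, ← pow_mul, Nat.mul_div_cancel' hi]⟩
  · rw [Nat.card_zpowers, Nat.card_zpowers, orderOf_pow_orderOf_div (orderOf_pos _).ne' hdvd]

theorem zpowers_eq_of_orderOf_eq {G : Type*} [Group G] [Finite G] {w x y : G}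
    (hx : x ∈ zpowers w) (hy : y ∈ zpowers w) (h : orderOf x = orderOf y) :
    zpowers x = zpowers y := by
  rw [zpowers_eq_zpowers_pow_of_mem hx, zpowers_eq_zpowers_pow_of_mem hy, h]

theorem mem_zpowers_mul_of_coprime {G : Type*} [CommGroup G] {a b : G}
    (h : (orderOf a).Coprime (orderOf b)) : a ∈ zpowers (a * b) := by
  obtain ⟨t, ha, hb⟩ := Nat.chineseRemainder h 1 0
  refine ⟨t, ?_⟩
  simp only [zpow_natCast, mul_pow, pow_eq_pow_iff_modEq.mpr ha, pow_eq_pow_iff_modEq.mpr hb,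
    pow_one, pow_zero, mul_one]

theorem exists_mem_zpowers_of_coprime {G : Type*} [CommGroup G] {a b : G}
    (h : (orderOf a).Coprime (orderOf b)) : ∃ w, a ∈ zpowers w ∧ b ∈ zpowers w :=
  ⟨a * b, mem_zpowers_mul_of_coprime h, mul_comm a b ▸ mem_zpowers_mul_of_coprime h.symm⟩

theorem exists_mem_zpowers_prod_iff {G H : Type*} [Group G] [Group H] [IsCyclic H]
    (hcop : (Nat.card G).Coprime (Nat.card H)) {u v : G × H} :
    (∃ w, u ∈ zpowers w ∧ v ∈ zpowers w) ↔ ∃ w, u.1 ∈ zpowers w ∧ v.1 ∈ zpowers w := by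
  constructor
  · rintro ⟨w, hu, hv⟩
    exact ⟨w.1, (MonoidHom.map_zpowers (MonoidHom.fst G H) w) ▸ mem_map_of_mem _ hu,
      (MonoidHom.map_zpowers (MonoidHom.fst G H) w) ▸ mem_map_of_mem _ hv⟩
  · rintro ⟨w, hu, hv⟩
    have : IsCyclic (zpowers w × H) := Group.isCyclic_prod_iff.mpr
      ⟨inferInstance, inferInstance, hcop.coprime_dvd_left (card_subgroup_dvd_card _)⟩
    obtain ⟨g, hg⟩ := IsCyclic.exists_generator (α := zpowers w × H)
    have key : ∀ z : G × H, z.1 ∈ zpowers w → z ∈ zpowers ((g.1 : G), g.2) := by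
      intro z hz
      obtain ⟨k, hk⟩ := hg (⟨z.1, hz⟩, z.2)
      refine ⟨k, Prod.ext ?_ ?_⟩
      · simpa using congrArg (fun y => (y.1 : G)) hk
      · simpa using congrArg Prod.snd hk
    exact ⟨_, key u hu, key v hv⟩

theorem IsPGroup.isCyclic_of_forall_orderOf_eq_mem_zpowers {G : Type*} [CommGroup G] [Finite G]
    {p : ℕ} [hp : Fact p.Prime] (hG : IsPGroup p G)
    (h : ∀ b c : G, orderOf b = p → orderOf c = p → b ∈ zpowers c) : IsCyclic G := by
  obtain ⟨g, hg⟩ := Monoid.exists_orderOf_eq_exponent (Monoid.ExponentExists.of_finite (G := G))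
  have hdvd (x : G) : orderOf x ∣ orderOf g := hg ▸ Monoid.order_dvd_exponent x
  -- Induction on `orderOf x`: `x ^ p = g ^ (p * s)` since `g` has maximal order, and then
  -- `x * (g ^ s)⁻¹` has order dividing `p`, so it lies in the subgroup of order `p` of `⟨g⟩`.
  suffices hall : ∀ x, x ∈ zpowers g from ⟨g, fun x => mem_zpowers_iff.mp (hall x)⟩
  intro x
  induction h : orderOf x using Nat.strong_induction_on generalizing x with
  | _ k ih =>
  subst h
  rcases eq_or_ne x 1 with rfl | hx
  · exact one_mem _
  have hpx : p ∣ orderOf x := hG.dvd_orderOf hx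
  have hlt : orderOf (x ^ p) < orderOf x := by
    rw [orderOf_pow_of_dvd hp.out.ne_zero hpx]
    exact Nat.div_lt_self (orderOf_pos x) hp.out.one_lt
  obtain ⟨t, ht⟩ : ∃ t : ℕ, g ^ t = x ^ p :=
    mem_powers_iff_mem_zpowers.mpr (ih _ hlt (x ^ p) rfl)
  obtain ⟨s, rfl⟩ : p ∣ t := by
    by_contra hpt
    obtain ⟨m, hm⟩ := IsPGroup.iff_orderOf.mp hG g
    have hcop : (orderOf g).Coprime t := hm ▸ (hp.out.coprime_iff_not_dvd.mpr hpt).pow_left m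
    have := hcop.orderOf_pow
    rw [ht] at this
    exact absurd (this ▸ hlt) (Nat.le_of_dvd (orderOf_pos g) (hdvd x)).not_gt
  have hy : (x * (g ^ s)⁻¹) ^ p = 1 := by
    rw [mul_pow, inv_pow, ← pow_mul, mul_comm s p, ht, mul_inv_cancel]
  have hy_mem : x * (g ^ s)⁻¹ ∈ zpowers g := by
    rcases eq_or_ne (x * (g ^ s)⁻¹) 1 with h1 | h1
    · exact h1 ▸ one_mem _
    have hg' : orderOf (g ^ (orderOf g / p)) = p :=
      orderOf_pow_orderOf_div (orderOf_pos g).ne' (hpx.trans (hdvd x))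
    exact zpowers_le.mpr (pow_mem (mem_zpowers g) _) (h _ _ (orderOf_eq_prime hy h1) hg')
  simpa using mul_mem hy_mem (pow_mem (mem_zpowers g) s)

theorem Sylow.exists_orderOf_eq_not_mem_zpowers {G : Type*} [CommGroup G] [Finite G]
    {p : ℕ} [Fact p.Prime] {P : Sylow p G} (hP : ¬ IsCyclic P) :
    ∃ b c : G, orderOf b = p ∧ orderOf c = p ∧ b ∉ zpowers c := by
  by_contra! h
  refine hP (P.isPGroup'.isCyclic_of_forall_orderOf_eq_mem_zpowers fun b c hb hc => ?_)
  obtain ⟨k, hk⟩ := h b c (by rwa [orderOf_coe]) (by rwa [orderOf_coe])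
  exact ⟨k, Subtype.ext (by simpa using hk)⟩

theorem SimpleGraph.Reachable.eq_of_forall_adj {V β : Type*} {Γ : SimpleGraph V} {f : V → β}
    (hf : ∀ u v, Γ.Adj u v → f u = f v) {u v : V} (h : Γ.Reachable u v) : f u = f v := by
  obtain ⟨w⟩ := h
  induction w with
  | nil => rfl
  | cons hadj _ ih => exact (hf _ _ hadj).trans ih

theorem exists_prime_orderOf_pow {G : Type*} [Group G] [Finite G] {a : G} (ha : a ≠ 1) :
    ∃ r k : ℕ, r.Prime ∧ orderOf (a ^ k) = r := by
  obtain ⟨r, hr, hra⟩ := Nat.exists_prime_and_dvd (mt orderOf_eq_one_iff.mp ha)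
  exact ⟨r, _, hr, orderOf_pow_orderOf_div (orderOf_pos a).ne' hra⟩

theorem ne_one_of_orderOf_eq_prime {G : Type*} [Group G] {a : G} {p : ℕ} (hp : p.Prime)
    (ha : orderOf a = p) : a ≠ 1 := by
  rintro rfl
  exact hp.ne_one (by rw [← ha, orderOf_one])

theorem exists_two_primes_dvd_card_of_not_isPGroup {G : Type*} [Group G] [Finite G]
    (h : ¬ ∃ p : ℕ, p.Prime ∧ IsPGroup p G) :
    ∃ p q : ℕ, p.Prime ∧ q.Prime ∧ p ≠ q ∧ p ∣ Nat.card G ∧ q ∣ Nat.card G := by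
  have hne : Nat.card G ≠ 1 := fun h1 => h ⟨2, Nat.prime_two, .of_card (n := 0) h1⟩
  have hp := Nat.minFac_prime hne
  by_contra! hq
  refine h ⟨_, hp, .of_card (Nat.eq_prime_pow_of_unique_prime_dvd Nat.card_pos.ne' ?_)⟩
  intro q hq' hqG
  by_contra hne'
  exact hq _ q hp hq' (Ne.symm hne') (Nat.minFac_dvd _) hqG

namespace enhancedPowerGraph

theorem isDominating_iff {G : Type*} [Group G] {a : G} :
    IsDominating (enhancedPowerGraph G) a ↔ ∀ b, ∃ w, a ∈ zpowers w ∧ b ∈ zpowers w := by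
  refine ⟨fun h b => ?_, fun h b hb => ⟨hb.symm, h b⟩⟩
  rcases eq_or_ne b a with rfl | hb
  · exact ⟨b, mem_zpowers b, mem_zpowers b⟩
  · exact (h b hb).2

theorem isDominating_iff_eq_one {G : Type*} [CommGroup G] [Finite G]
    (hsyl : ∀ p : ℕ, p.Prime → p ∣ Nat.card G → ∀ P : Sylow p G, ¬ IsCyclic (P : Subgroup G))
    {a : G} : IsDominating (enhancedPowerGraph G) a ↔ a = 1 := by
  rw [isDominating_iff]
  refine ⟨fun h => ?_, fun h b => ⟨b, h ▸ one_mem _, mem_zpowers b⟩⟩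
  by_contra ha
  obtain ⟨r, k, hr, hrk⟩ := exists_prime_orderOf_pow ha
  have : Fact r.Prime := ⟨hr⟩
  obtain ⟨P⟩ : Nonempty (Sylow r G) := inferInstance
  obtain ⟨b, c, hb, hc, hbc⟩ := Sylow.exists_orderOf_eq_not_mem_zpowers
    (hsyl r hr (hrk ▸ orderOf_dvd_natCard _) P)
  have hsame {d : G} (hd : orderOf d = r) : zpowers d = zpowers (a ^ k) := by
    obtain ⟨w, haw, hdw⟩ := h d
    exact zpowers_eq_of_orderOf_eq hdw (pow_mem haw k) (hd.trans hrk.symm)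
  exact hbc ((hsame hb).trans (hsame hc).symm ▸ mem_zpowers b)

variable {H : Type*} [Group H] [IsCyclic H]

theorem prod_adj_iff {G : Type*} [Group G] (hcop : (Nat.card G).Coprime (Nat.card H))
    {u v : G × H} :
    (enhancedPowerGraph (G × H)).Adj u v ↔ u ≠ v ∧ ∃ w, u.1 ∈ zpowers w ∧ v.1 ∈ zpowers w :=
  and_congr_right' (exists_mem_zpowers_prod_iff hcop)

theorem isDominating_prod_iff {G : Type*} [Group G] (hcop : (Nat.card G).Coprime (Nat.card H))
    {v : G × H} :
    IsDominating (enhancedPowerGraph (G × H)) v ↔ IsDominating (enhancedPowerGraph G) v.1 := by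
  simp only [isDominating_iff]
  exact ⟨fun h b => (exists_mem_zpowers_prod_iff hcop (v := (b, v.2))).mp (h _),
    fun h u => (exists_mem_zpowers_prod_iff hcop).mpr (h u.1)⟩

theorem connected_induce_fst_ne_one {G : Type*} [CommGroup G] [Finite G]
    (hcop : (Nat.card G).Coprime (Nat.card H)) {p q : ℕ} (hp : p.Prime) (hq : q.Prime)
    (hpq : p ≠ q) (hpG : p ∣ Nat.card G) (hqG : q ∣ Nat.card G) :
    ((enhancedPowerGraph (G × H)).induce {v | v.1 ≠ 1}).Connected := by
  set S := {v : G × H | v.1 ≠ 1}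
  have reach (u v : S) (h : ∃ w, u.1.1 ∈ zpowers w ∧ v.1.1 ∈ zpowers w) :
      ((enhancedPowerGraph (G × H)).induce S).Reachable u v := by
    rcases eq_or_ne u v with rfl | huv
    · rfl
    · exact SimpleGraph.Adj.reachable ((prod_adj_iff hcop).mpr ⟨Subtype.coe_ne_coe.mpr huv, h⟩)
  have : Fact p.Prime := ⟨hp⟩
  have : Fact q.Prime := ⟨hq⟩
  obtain ⟨x, hx⟩ := exists_prime_orderOf_dvd_card' p hpG
  obtain ⟨y, hy⟩ := exists_prime_orderOf_dvd_card' q hqG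
  let X : S := ⟨(x, 1), ne_one_of_orderOf_eq_prime hp hx⟩
  let Y : S := ⟨(y, 1), ne_one_of_orderOf_eq_prime hq hy⟩
  have reach_coprime {u v : S} {s t : ℕ} (hs : s.Prime) (ht : t.Prime) (hst : s ≠ t)
      (hu : orderOf u.1.1 = s) (hv : orderOf v.1.1 = t) :
      ((enhancedPowerGraph (G × H)).induce S).Reachable u v :=
    reach u v (exists_mem_zpowers_of_coprime (hu ▸ hv ▸ (Nat.coprime_primes hs ht).mpr hst))
  refine (SimpleGraph.connected_iff_exists_forall_reachable _).mpr ⟨X, fun v => ?_⟩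
  obtain ⟨r, k, hr, hrk⟩ := exists_prime_orderOf_pow v.2
  let V : S := ⟨(v.1.1 ^ k, 1), ne_one_of_orderOf_eq_prime hr hrk⟩
  have hV : ((enhancedPowerGraph (G × H)).induce S).Reachable V v :=
    reach V v ⟨v.1.1, pow_mem (mem_zpowers _) k, mem_zpowers _⟩
  rcases eq_or_ne p r with rfl | hpr
  · exact (reach_coprime hp hq hpq hx hy (v := Y)).trans
      ((reach_coprime hq hp hpq.symm hy hrk).trans hV)
  · exact (reach_coprime hp hr hpr hx hrk).trans hV

theorem not_connected_induce_fst_ne_one {G : Type*} [CommGroup G] [Finite G]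
    (hcop : (Nat.card G).Coprime (Nat.card H)) {p : ℕ} [hp : Fact p.Prime] (hG : IsPGroup p G)
    (hP : ∀ P : Sylow p G, ¬ IsCyclic P) :
    ¬ ((enhancedPowerGraph (G × H)).induce {v | v.1 ≠ 1}).Connected := by
  intro hconn
  obtain ⟨P⟩ : Nonempty (Sylow p G) := inferInstance
  obtain ⟨b, c, hb, hc, hbc⟩ := Sylow.exists_orderOf_eq_not_mem_zpowers (hP P)
  let f : {v : G × H | v.1 ≠ 1} → Subgroup G := fun v => zpowers (v.1.1 ^ (orderOf v.1.1 / p))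
  have hf (u v) (huv : ((enhancedPowerGraph (G × H)).induce {v | v.1 ≠ 1}).Adj u v) :
      f u = f v := by
    obtain ⟨-, w, huw, hvw⟩ := (prod_adj_iff hcop).mp huv
    refine zpowers_eq_of_orderOf_eq (pow_mem huw _) (pow_mem hvw _) ?_
    rw [orderOf_pow_orderOf_div (orderOf_pos _).ne' (hG.dvd_orderOf u.2),
      orderOf_pow_orderOf_div (orderOf_pos _).ne' (hG.dvd_orderOf v.2)]
  have hbc' := (hconn.preconnected ⟨(b, 1), ne_one_of_orderOf_eq_prime hp.out hb⟩
    ⟨(c, 1), ne_one_of_orderOf_eq_prime hp.out hc⟩).eq_of_forall_adj hf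
  simp only [f, hb, hc, Nat.div_self hp.out.pos, pow_one] at hbc'
  exact hbc (hbc' ▸ mem_zpowers b)

end enhancedPowerGraph

open enhancedPowerGraph in
theorem stmt_9_general {G₁ : Type*} [CommGroup G₁] [Finite G₁]
    (hsyl : ∀ p : ℕ, p.Prime → p ∣ Nat.card G₁ →
      ∀ P : Sylow p G₁, ¬ IsCyclic (P : Subgroup G₁))
    (n : ℕ) (hcop : Nat.gcd (Nat.card G₁) n = 1) :
    ¬ ((enhancedPowerGraph (G₁ × Multiplicative (ZMod n))).induce
        {v | ¬ IsDominating (enhancedPowerGraph (G₁ × Multiplicative (ZMod n))) v}).Connected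
      ↔ ∃ p : ℕ, p.Prime ∧ IsPGroup p G₁ := by
  have hcop' : (Nat.card G₁).Coprime (Nat.card (Multiplicative (ZMod n))) := by
    rwa [Nat.card_congr Multiplicative.toAdd, Nat.card_zmod]
  have hS : {v | ¬ IsDominating (enhancedPowerGraph (G₁ × Multiplicative (ZMod n))) v} =
      {v | v.1 ≠ 1} := by
    ext v
    simp only [Set.mem_ofPred_eq, isDominating_prod_iff hcop', isDominating_iff_eq_one hsyl]
  rw [hS]
  constructor
  · intro hdis
    by_contra hnp
    obtain ⟨p, q, hp, hq, hpq, hpG, hqG⟩ := exists_two_primes_dvd_card_of_not_isPGroup hnp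
    exact hdis (connected_induce_fst_ne_one hcop' hp hq hpq hpG hqG)
  · rintro ⟨p, hp, hG⟩ hconn
    have : Fact p.Prime := ⟨hp⟩
    obtain ⟨⟨v, hv⟩⟩ := hconn.nonempty
    exact not_connected_induce_fst_ne_one hcop' hG
      (hsyl p hp ((hG.dvd_orderOf hv).trans (orderOf_dvd_natCard _))) hconn

theorem stmt_9 {G₁ : Type*} [CommGroup G₁] [Finite G₁] (hnc : ¬ IsCyclic G₁)
    (hsyl : ∀ p : ℕ, p.Prime → p ∣ Nat.card G₁ →
      ∀ P : Sylow p G₁, ¬ IsCyclic (P : Subgroup G₁))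
    (n : ℕ) (hn : 0 < n) (hcop : Nat.gcd (Nat.card G₁) n = 1) :
    ¬ ((enhancedPowerGraph (G₁ × Multiplicative (ZMod n))).induce
        {v | ¬ IsDominating (enhancedPowerGraph (G₁ × Multiplicative (ZMod n))) v}).Connected
      ↔ ∃ p : ℕ, p.Prime ∧ IsPGroup p G₁ :=
  stmt_9_general hsyl n hcop
end

section
/- Let G ≅ G₁ × ℤ_n where G₁ is a finite non-cyclic abelian p-group (so it has no cyclic Sylow subgroup) and gcd(|G₁|, n) = 1 with n > 1. Then the vertex connectivity of the enhanced power graph of G equals n. -/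
/-!
Let `C` be cyclic of order `n`, generated by `g`. Since `n` is coprime to `|G₁|`, the Chinese
remainder theorem puts `(1, b)` and `(x, y)` together in `⟨(x, g)⟩`, so the `n` vertices
`(1, b)` are dominating and deleting fewer than `n` vertices leaves the graph connected.
Deleting all of them disconnects it: on the vertices `(x, y)` with `x ≠ 1`, the unique subgroup
of order `p` of `⟨x⟩` is constant along edges, and a noncyclic abelian `p`-group has two
distinct subgroups of order `p` (if `a ^ p = 1` had at most `p` solutions, `a ^ m = 1` would have
at most `m` solutions for every `m`, forcing the group to be cyclic).
-/

open Subgroup Finset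

namespace SimpleGraph

variable {V : Type*} {Γ : SimpleGraph V}

theorem not_connected_of_adj_imp_eq {α : Type*} (F : V → α)
    (hF : ∀ u v, Γ.Adj u v → F u = F v) {u v : V} (huv : F u ≠ F v) : ¬Γ.Connected := by
  intro hΓ
  obtain ⟨walk⟩ := hΓ u v
  induction walk with
  | nil => exact huv rfl
  | cons hadj _ ih => exact ih fun h => huv ((hF _ _ hadj).trans h)

theorem connected_induce_compl_of_isDominating {s : Set V} {v : V} (hv : IsDominating Γ v)
    (hvs : v ∉ s) : (Γ.induce sᶜ).Connected := by
  refine (connected_iff_exists_forall_reachable _).2 ⟨⟨v, hvs⟩, fun u => ?_⟩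
  rcases eq_or_ne u ⟨v, hvs⟩ with rfl | hu
  · rfl
  · exact Adj.reachable (G := Γ.induce sᶜ) (hv u fun h => hu (Subtype.ext h))

theorem vertexConnectivity_eq {s : Set V} {k : ℕ} (hs : s.ncard = k)
    (hdisc : ¬(Γ.induce sᶜ).Connected)
    (hconn : ∀ t : Set V, t.ncard < k → (Γ.induce tᶜ).Connected) :
    vertexConnectivity Γ = k :=
  IsLeast.csInf_eq
    ⟨⟨s, hs, hdisc⟩, fun _ ⟨t, ht, htd⟩ => ht ▸ not_lt.mp fun h => htd (hconn t h)⟩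

end SimpleGraph

section CountingRoots

variable {G : Type*} [CommGroup G] [Fintype G] [DecidableEq G]

theorem card_pow_mul_eq_one_le (m k : ℕ) :
    #{a : G | a ^ (m * k) = 1} ≤ #{a : G | a ^ m = 1} * #{a : G | a ^ k = 1} := by
  set s : Finset G := {a | a ^ (m * k) = 1}
  calc #s ≤ #{a : G | a ^ m = 1} * #(s.image (· ^ m)) := by
        refine card_le_mul_card_image s _ fun b hb => ?_
        obtain ⟨c, -, rfl⟩ := mem_image.mp hb
        -- the fibre over `c ^ m` lies in the translate of `{a | a ^ m = 1}` by `c`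
        refine card_le_card_of_injOn (· * c⁻¹) (fun a ha => ?_) (mul_left_injective _).injOn
        simp only [mem_coe, mem_filter, mem_univ, true_and] at ha ⊢
        rw [mul_pow, ha.2, inv_pow, mul_inv_cancel]
    _ ≤ #{a : G | a ^ m = 1} * #{a : G | a ^ k = 1} := by
        refine Nat.mul_le_mul_left _ (card_le_card fun b hb => ?_)
        obtain ⟨a, ha, rfl⟩ := mem_image.mp hb
        simp only [s, mem_filter, mem_univ, true_and] at ha ⊢
        rwa [← pow_mul]

theorem card_pow_pow_eq_one_le (q j : ℕ) :
    #{a : G | a ^ (q ^ j) = 1} ≤ #{a : G | a ^ q = 1} ^ j := by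
  induction j with
  | zero => simp [filter_eq']
  | succ j ih =>
    rw [pow_succ, pow_succ]
    exact (card_pow_mul_eq_one_le _ _).trans (Nat.mul_le_mul_right _ ih)

theorem IsPGroup.isCyclic_of_card_pow_prime_eq_one_le {p : ℕ} [Fact p.Prime]
    (hpG : IsPGroup p G) (h : #{a : G | a ^ p = 1} ≤ p) : IsCyclic G := by
  refine isCyclic_of_card_pow_eq_one_le fun m hm => ?_
  calc #{a : G | a ^ m = 1} ≤ #{a : G | a ^ (p ^ m.factorization p) = 1} := by
        refine card_le_card fun a ha => ?_
        simp only [mem_filter, mem_univ, true_and] at ha ⊢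
        obtain ⟨i, hi⟩ := IsPGroup.iff_orderOf.mp hpG a
        rw [← orderOf_dvd_iff_pow_eq_one, hi] at ha ⊢
        exact (Nat.Prime.pow_dvd_iff_dvd_ordProj Fact.out hm.ne').mp ha
    _ ≤ #{a : G | a ^ p = 1} ^ m.factorization p := card_pow_pow_eq_one_le _ _
    _ ≤ p ^ m.factorization p := Nat.pow_le_pow_left h _
    _ ≤ m := Nat.ordProj_le p hm.ne'

end CountingRoots

theorem IsPGroup.exists_zpowers_ne_of_not_isCyclic {p : ℕ} [Fact p.Prime] {G : Type*}
    [CommGroup G] [Finite G] (hpG : IsPGroup p G) (hnc : ¬IsCyclic G) :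
    ∃ a b : G, orderOf a = p ∧ orderOf b = p ∧ zpowers a ≠ zpowers b := by
  classical
  have := Fintype.ofFinite G
  have : Nontrivial G := not_subsingleton_iff_nontrivial.mp fun _ => hnc inferInstance
  obtain ⟨g, hg⟩ := exists_ne (1 : G)
  obtain ⟨a, ha⟩ := exists_prime_orderOf_dvd_card' p
    ((hpG.dvd_orderOf hg).trans (orderOf_dvd_natCard g))
  by_contra! hall
  refine hnc (hpG.isCyclic_of_card_pow_prime_eq_one_le ?_)
  calc #{b : G | b ^ p = 1} ≤ #((range (orderOf a)).image (a ^ ·)) := by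
        refine card_le_card fun b hb => ?_
        rw [mem_filter] at hb
        rw [← mem_powers_iff_mem_range_orderOf,
          (isOfFinOrder_of_finite a).mem_powers_iff_mem_zpowers]
        rcases (Nat.dvd_prime Fact.out).mp (orderOf_dvd_of_pow_eq_one hb.2) with hb1 | hbp
        · rw [orderOf_eq_one_iff.mp hb1]
          exact one_mem _
        · exact hall b a hbp ha ▸ mem_zpowers b
    _ ≤ p := card_image_le.trans (by rw [card_range, ha])

theorem mem_zpowers_pow_orderOf_div {G : Type*} [Group G] {x w : G} (hw : IsOfFinOrder w)
    (hx : x ∈ zpowers w) : x ∈ zpowers (w ^ (orderOf w / orderOf x)) := by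
  obtain ⟨k, rfl : w ^ k = x⟩ := hw.mem_powers_iff_mem_zpowers.mpr hx
  obtain ⟨m, hm⟩ : orderOf w / orderOf (w ^ k) ∣ k := by
    have : orderOf w ∣ k * orderOf (w ^ k) :=
      orderOf_dvd_of_pow_eq_one (by rw [pow_mul, pow_orderOf_eq_one])
    rwa [← Nat.div_mul_cancel (orderOf_dvd_of_mem_zpowers hx), Nat.mul_dvd_mul_iff_right
      (orderOf_pos_iff.mpr hw.pow)] at this
  refine ⟨m, ?_⟩
  dsimp only
  rw [zpow_natCast, ← pow_mul, ← hm]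

theorem IsPGroup.zpowers_pow_orderOf_div_eq {p : ℕ} [Fact p.Prime] {G : Type*} [Group G]
    [Finite G] (hpG : IsPGroup p G) {x w : G} (hx : x ≠ 1) (hxw : x ∈ zpowers w) :
    zpowers (x ^ (orderOf x / p)) = zpowers (w ^ (orderOf w / p)) := by
  have hw : w ≠ 1 := by
    rintro rfl
    exact hx (by simpa using hxw)
  have hox : orderOf (x ^ (orderOf x / p)) = p :=
    orderOf_pow_orderOf_div (orderOf_pos x).ne' (hpG.dvd_orderOf hx)
  have how : orderOf (w ^ (orderOf w / p)) = p :=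
    orderOf_pow_orderOf_div (orderOf_pos w).ne' (hpG.dvd_orderOf hw)
  have hmem := mem_zpowers_pow_orderOf_div (isOfFinOrder_of_finite w)
    (zpowers_le_of_mem hxw (npow_mem_zpowers x (orderOf x / p)))
  rw [hox] at hmem
  exact eq_of_le_of_card_ge (zpowers_le_of_mem hmem)
    (by rw [Nat.card_zpowers, Nat.card_zpowers, hox, how])

theorem mem_zpowers_mk_of_coprime {G M : Type*} [Group G] [Group M] {x a : G} {y b : M}
    (hx : IsOfFinOrder x) (hy : IsOfFinOrder y) (hco : (orderOf x).Coprime (orderOf y))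
    (ha : a ∈ zpowers x) (hb : b ∈ zpowers y) : (a, b) ∈ zpowers (x, y) := by
  obtain ⟨i, rfl⟩ := hx.mem_powers_iff_mem_zpowers.mpr ha
  obtain ⟨j, rfl⟩ := hy.mem_powers_iff_mem_zpowers.mpr hb
  obtain ⟨k, hki, hkj⟩ := Nat.chineseRemainder hco i j
  have : (x, y) ^ k = (x ^ i, y ^ j) :=
    Prod.ext (pow_eq_pow_iff_modEq.mpr hki) (pow_eq_pow_iff_modEq.mpr hkj)
  exact this ▸ npow_mem_zpowers _ k

theorem isDominating_enhancedPowerGraph_one_mk {G M : Type*} [Group G] [Finite G] [Group M]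
    [Finite M] [IsCyclic M] (hcop : (Nat.card G).Coprime (Nat.card M)) (b : M) :
    IsDominating (enhancedPowerGraph (G × M)) (1, b) := by
  obtain ⟨g, hg⟩ := IsCyclic.exists_generator (α := M)
  intro u hu
  have hco : (orderOf u.1).Coprime (orderOf g) :=
    (hcop.coprime_dvd_left (orderOf_dvd_natCard _)).coprime_dvd_right (orderOf_dvd_natCard _)
  have mem : ∀ {a b}, a ∈ zpowers u.1 → b ∈ zpowers g → (a, b) ∈ zpowers (u.1, g) :=
    mem_zpowers_mk_of_coprime (isOfFinOrder_of_finite u.1) (isOfFinOrder_of_finite g) hco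
  exact ⟨hu.symm, (u.1, g), mem (one_mem _) (hg b), mem (mem_zpowers _) (hg u.2)⟩

theorem not_connected_induce_enhancedPowerGraph_prod {p : ℕ} [Fact p.Prime] {G : Type*}
    [CommGroup G] [Finite G] (hpG : IsPGroup p G) (hnc : ¬IsCyclic G) (M : Type*) [Group M] :
    ¬((enhancedPowerGraph (G × M)).induce {v | v.1 = 1}ᶜ).Connected := by
  obtain ⟨a, b, ha, hb, hab⟩ := hpG.exists_zpowers_ne_of_not_isCyclic hnc
  have ne_one : ∀ c : G, orderOf c = p → c ≠ 1 := by
    rintro c hc rfl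
    rw [orderOf_one] at hc
    exact (Fact.out : p.Prime).ne_one hc.symm
  have fst_mem : ∀ {u w : G × M}, u ∈ zpowers w → u.1 ∈ zpowers w.1 := fun h =>
    (MonoidHom.fst G M).map_zpowers _ ▸ mem_map_of_mem _ h
  refine SimpleGraph.not_connected_of_adj_imp_eq
    (fun v : ↥({v | v.1 = 1}ᶜ : Set (G × M)) => zpowers (v.1.1 ^ (orderOf v.1.1 / p)))
    (u := ⟨(a, 1), ne_one a ha⟩) (v := ⟨(b, 1), ne_one b hb⟩) ?_ ?_
  · rintro u v ⟨-, w, hu, hv⟩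
    exact (hpG.zpowers_pow_orderOf_div_eq u.2 (fst_mem hu)).trans
      (hpG.zpowers_pow_orderOf_div_eq v.2 (fst_mem hv)).symm
  · simpa [ha, hb, Nat.div_self (Fact.out : p.Prime).pos] using hab

theorem ncard_setOf_fst_eq {α β : Type*} (a : α) :
    {v : α × β | v.1 = a}.ncard = Nat.card β := by
  rw [← Set.ncard_range_of_injective (Prod.mk_right_injective a)]
  congr
  ext v
  exact ⟨fun h => ⟨v.2, Prod.ext h.symm rfl⟩, by rintro ⟨b, rfl⟩; rfl⟩

theorem stmt_11 {p : ℕ} (hp : p.Prime) {G₁ : Type*} [CommGroup G₁] [Finite G₁]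
    (hpG : IsPGroup p G₁) (hnc : ¬ IsCyclic G₁)
    (n : ℕ) (hn : 1 < n) (hcop : Nat.gcd (Nat.card G₁) n = 1) :
    vertexConnectivity (enhancedPowerGraph (G₁ × Multiplicative (ZMod n))) = n := by
  have : Fact p.Prime := ⟨hp⟩
  have : NeZero n := ⟨by omega⟩
  have hcard : Nat.card (Multiplicative (ZMod n)) = n := by simp
  have hS := ncard_setOf_fst_eq (β := Multiplicative (ZMod n)) (1 : G₁)
  rw [hcard] at hS
  refine SimpleGraph.vertexConnectivity_eq hS
    (not_connected_induce_enhancedPowerGraph_prod hpG hnc _) fun t ht => ?_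
  obtain ⟨⟨x, b⟩, rfl : x = 1, hbt⟩ :=
    Set.exists_mem_notMem_of_ncard_lt_ncard (ht.trans_eq hS.symm)
  exact SimpleGraph.connected_induce_compl_of_isDominating
    (isDominating_enhancedPowerGraph_one_mk (by rwa [hcard]) b) hbt
end
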